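/- arXiv:1006.1661 — 4 statements merged into one kernel-verified Lean document; each statement's English description precedes it below -/
import Mathlib

section
/- If B is a complex LLL-reduced basis with parameter δ (1/2 < δ ≤ 1) and α = 1/(δ - 1/2), then ‖b₁‖ ≤ α^{(n-1)/4} |det B|^{1/n}. -/
/-- The `i`-th column of a complex matrix, as a vector of `ℂⁿ`. -/
noncomputable def col {n : ℕ} (B : Matrix (Fin n) (Fin n) ℂ) (i : Fin n) :
    EuclideanSpace ℂ (Fin n) :=
  (WithLp.equiv 2 (Fin n → ℂ)).symm (fun x => B x i)

/-- Gram-Schmidt orthogonalization of a family of vectors in ℂⁿ. -/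
noncomputable def gso {n : ℕ} (b : Fin n → EuclideanSpace ℂ (Fin n)) :
    Fin n → EuclideanSpace ℂ (Fin n) :=
  @InnerProductSpace.gramSchmidt ℂ _ _ _ _ (Fin n) _ _ (inferInstance : WellFoundedLT (Fin n)) b

/-- Gram-Schmidt coefficient μ_{i,j} = ⟨bᵢ, b̂ⱼ⟩ / ‖b̂ⱼ‖². -/
noncomputable def mu {n : ℕ} (b : Fin n → EuclideanSpace ℂ (Fin n)) (i j : Fin n) : ℂ :=
  (inner ℂ (gso b j) (b i) : ℂ) / ((‖gso b j‖ ^ 2 : ℝ) : ℂ)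

/-- B is complex LLL-reduced with parameter δ: size-reduced plus the Lovász condition. -/
def LLLReduced {n : ℕ} (δ : ℝ) (b : Fin n → EuclideanSpace ℂ (Fin n)) : Prop :=
  (∀ i j : Fin n, j < i → |(mu b i j).re| ≤ 1/2 ∧ |(mu b i j).im| ≤ 1/2) ∧
  (∀ i j : Fin n, j.val + 1 = i.val →
    ‖gso b i‖^2 ≥ (δ - ‖mu b i j‖ ^ 2) * ‖gso b j‖^2)

/-! The first vector `b₁` is also the first Gram–Schmidt vector `b̂₁`, and `|det B| = ∏ ‖b̂ᵢ‖`.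
Size reduction gives `|μ_{i,i-1}|² ≤ 1/2`, so the Lovász condition yields
`‖b̂ᵢ‖² ≥ (δ - 1/2) ‖b̂_{i-1}‖²` and hence `‖b̂ᵢ‖² ≥ (δ - 1/2)^(i-1) ‖b₁‖²`. Multiplying over `i`
gives `(δ - 1/2)^(n(n-1)/2) ‖b₁‖^(2n) ≤ |det B|²`; take `2n`-th roots. -/

open Finset

namespace InnerProductSpace

variable {𝕜 E ι : Type*} [RCLike 𝕜] [NormedAddCommGroup E] [InnerProductSpace 𝕜 E]
  [LinearOrder ι] [LocallyFiniteOrderBot ι] [WellFoundedLT ι]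

theorem inner_gramSchmidt_self (f : ι → E) (i : ι) :
    inner 𝕜 (gramSchmidt 𝕜 f i) (f i) = (‖gramSchmidt 𝕜 f i‖ : 𝕜) ^ 2 := by
  conv_lhs => rw [gramSchmidt_def'' 𝕜 f i]
  rw [inner_add_right, inner_self_eq_norm_sq_to_K, inner_sum, add_eq_left]
  refine sum_eq_zero fun j hj => ?_
  rw [inner_smul_right, gramSchmidt_orthogonal 𝕜 f (mem_Iio.1 hj).ne', mul_zero]

variable [Fintype ι] [FiniteDimensional 𝕜 E]

theorem inner_gramSchmidtOrthonormalBasis_self (h : Module.finrank 𝕜 E = Fintype.card ι)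
    (f : ι → E) (i : ι) :
    inner 𝕜 (gramSchmidtOrthonormalBasis h f i) (f i) = ‖gramSchmidt 𝕜 f i‖ := by
  by_cases hi : gramSchmidtNormed 𝕜 f i = 0
  · rw [inner_gramSchmidtOrthonormalBasis_eq_zero h hi]
    simp_all [gramSchmidtNormed]
  · rw [gramSchmidtOrthonormalBasis_apply h hi, gramSchmidtNormed, inner_smul_left,
      inner_gramSchmidt_self]
    have hnorm : (‖gramSchmidt 𝕜 f i‖ : 𝕜) ≠ 0 := by
      rintro h0; simp [gramSchmidtNormed, h0] at hi
    rw [RCLike.conj_inv, RCLike.conj_ofReal, pow_two, inv_mul_cancel_left₀ hnorm]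

/-- In the orthonormal basis extending the normalized `gramSchmidt 𝕜 f`, the coordinate matrix of
`f` is upper triangular with diagonal `‖gramSchmidt 𝕜 f i‖`, and a change of orthonormal basis
has a determinant of norm one. -/
theorem norm_det_eq_prod_norm_gramSchmidt [DecidableEq ι]
    (h : Module.finrank 𝕜 E = Fintype.card ι) (e : OrthonormalBasis ι 𝕜 E) (f : ι → E) :
    ‖e.toBasis.det f‖ = ∏ i, ‖gramSchmidt 𝕜 f i‖ := by
  rw [e.toBasis.det.eq_smul_basis_det (gramSchmidtOrthonormalBasis h f).toBasis,
    AlternatingMap.smul_apply, smul_eq_mul, norm_mul, OrthonormalBasis.coe_toBasis,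
    e.det_to_matrix_orthonormalBasis, one_mul, gramSchmidtOrthonormalBasis_det, norm_prod]
  simp_rw [inner_gramSchmidtOrthonormalBasis_self, RCLike.norm_ofReal, abs_norm]

end InnerProductSpace

open InnerProductSpace

theorem basisFun_det_col {n : ℕ} (B : Matrix (Fin n) (Fin n) ℂ) :
    (EuclideanSpace.basisFun (Fin n) ℂ).toBasis.det (col B) = B.det := by
  rw [Module.Basis.det_apply]
  rfl

theorem norm_det_eq_prod_norm_gso {n : ℕ} (B : Matrix (Fin n) (Fin n) ℂ) :
    ‖B.det‖ = ∏ i, ‖gso (col B) i‖ := by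
  rw [← basisFun_det_col]
  exact norm_det_eq_prod_norm_gramSchmidt finrank_euclideanSpace _ _

theorem Finset.sum_range_id_eq_choose_two (m : ℕ) : ∑ i ∈ range m, i = m.choose 2 := by
  rw [sum_range_id, Nat.choose_two_right]

theorem Real.le_rpow_mul_rpow_of_pow_choose_mul_pow_le {c x D : ℝ} {m : ℕ} (hm : m ≠ 0)
    (hc : 0 < c) (hx : 0 ≤ x) (hD : 0 ≤ D) (h : c ^ m.choose 2 * x ^ (2 * m) ≤ D ^ 2) :
    x ≤ (1 / c) ^ (((m : ℝ) - 1) / 4) * D ^ ((1 : ℝ) / m) := by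
  have h2m : 2 * m ≠ 0 := by omega
  have hpow : x ^ (2 * m) ≤ (1 / c) ^ ((m.choose 2 : ℕ) : ℝ) * D ^ ((2 : ℕ) : ℝ) := by
    rw [Real.rpow_natCast, Real.rpow_natCast, one_div_pow, one_div_mul_eq_div,
      le_div_iff₀ (by positivity), mul_comm]
    exact h
  calc x = (x ^ (2 * m)) ^ ((2 * m : ℕ) : ℝ)⁻¹ := (Real.pow_rpow_inv_natCast hx h2m).symm
    _ ≤ ((1 / c) ^ ((m.choose 2 : ℕ) : ℝ) * D ^ ((2 : ℕ) : ℝ)) ^ ((2 * m : ℕ) : ℝ)⁻¹ := by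
      gcongr
    _ = (1 / c) ^ (((m : ℝ) - 1) / 4) * D ^ ((1 : ℝ) / m) := by
      rw [Real.mul_rpow (by positivity) (by positivity), ← Real.rpow_mul (by positivity),
        ← Real.rpow_mul hD, Nat.cast_choose_two]
      have hm' : (m : ℝ) ≠ 0 := by exact_mod_cast hm
      congr 2
      · push_cast; field_simp; ring
      · push_cast; field_simp

theorem Complex.sq_norm_le_half {z : ℂ} (hre : |z.re| ≤ 1 / 2) (him : |z.im| ≤ 1 / 2) :
    ‖z‖ ^ 2 ≤ 1 / 2 := by
  rw [Complex.sq_norm, Complex.normSq_apply]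
  nlinarith [abs_mul_abs_self z.re, abs_mul_abs_self z.im, abs_nonneg z.re, abs_nonneg z.im]

namespace LLLReduced

section

variable {n : ℕ} {δ : ℝ} {b : Fin n → EuclideanSpace ℂ (Fin n)}

theorem mul_sq_norm_gso_le (hb : LLLReduced δ b) {i j : Fin n} (hij : j.val + 1 = i.val) :
    (δ - 1 / 2) * ‖gso b j‖ ^ 2 ≤ ‖gso b i‖ ^ 2 := by
  obtain ⟨hre, him⟩ := hb.1 i j (by rw [Fin.lt_def]; omega)
  have hμ := Complex.sq_norm_le_half hre him
  calc (δ - 1 / 2) * ‖gso b j‖ ^ 2 ≤ (δ - ‖mu b i j‖ ^ 2) * ‖gso b j‖ ^ 2 := by gcongr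
    _ ≤ ‖gso b i‖ ^ 2 := hb.2 i j hij

end

section

variable {n : ℕ} {δ : ℝ} {b : Fin (n + 1) → EuclideanSpace ℂ (Fin (n + 1))}

theorem pow_mul_sq_norm_gso_zero_le (hb : LLLReduced δ b) (hδ : 1 / 2 ≤ δ) (i : Fin (n + 1)) :
    (δ - 1 / 2) ^ (i : ℕ) * ‖gso b 0‖ ^ 2 ≤ ‖gso b i‖ ^ 2 := by
  induction i using Fin.induction with
  | zero => simp
  | succ i ih =>
    calc (δ - 1 / 2) ^ (i.succ : ℕ) * ‖gso b 0‖ ^ 2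
        = (δ - 1 / 2) * ((δ - 1 / 2) ^ (i.castSucc : ℕ) * ‖gso b 0‖ ^ 2) := by
          rw [Fin.val_succ, Fin.val_castSucc, pow_succ]; ring
      _ ≤ (δ - 1 / 2) * ‖gso b i.castSucc‖ ^ 2 := by gcongr
      _ ≤ ‖gso b i.succ‖ ^ 2 := hb.mul_sq_norm_gso_le (by simp)

theorem pow_choose_mul_norm_pow_le (hb : LLLReduced δ b) (hδ : 1 / 2 ≤ δ) :
    (δ - 1 / 2) ^ (n + 1).choose 2 * ‖b 0‖ ^ (2 * (n + 1)) ≤ ∏ i, ‖gso b i‖ ^ 2 := by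
  have hgso : gso b 0 = b 0 := gramSchmidt_bot ℂ b
  calc (δ - 1 / 2) ^ (n + 1).choose 2 * ‖b 0‖ ^ (2 * (n + 1))
      = ∏ i : Fin (n + 1), (δ - 1 / 2) ^ (i : ℕ) * ‖gso b 0‖ ^ 2 := by
        rw [prod_mul_distrib, prod_pow_eq_pow_sum, Fin.sum_univ_eq_sum_range (fun i => i),
          sum_range_id_eq_choose_two, prod_const, card_fin, hgso, ← pow_mul, mul_comm 2]
    _ ≤ ∏ i, ‖gso b i‖ ^ 2 :=
        prod_le_prod (fun _ _ => mul_nonneg (pow_nonneg (sub_nonneg.2 hδ) _) (sq_nonneg _))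
          fun i _ => hb.pow_mul_sq_norm_gso_zero_le hδ i

end

end LLLReduced

theorem stmt2_general (n : ℕ) (hn : 0 < n) (δ : ℝ) (hδ1 : 1/2 < δ)
    (B : Matrix (Fin n) (Fin n) ℂ)
    (hLLL : LLLReduced δ (col B)) :
    ‖col B ⟨0, hn⟩‖ ≤
      (1 / (δ - 1/2)) ^ (((n : ℝ) - 1) / 4) * ‖B.det‖ ^ ((1 : ℝ) / n) := by
  obtain ⟨m, rfl⟩ : ∃ m, n = m + 1 := ⟨n - 1, by omega⟩
  refine Real.le_rpow_mul_rpow_of_pow_choose_mul_pow_le m.succ_ne_zero (by linarith)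
    (norm_nonneg _) (norm_nonneg _) ?_
  rw [norm_det_eq_prod_norm_gso, ← prod_pow]
  exact hLLL.pow_choose_mul_norm_pow_le hδ1.le

theorem stmt2 (n : ℕ) (hn : 0 < n) (δ : ℝ) (hδ1 : 1/2 < δ) (hδ2 : δ ≤ 1)
    (B : Matrix (Fin n) (Fin n) ℂ) (hdet : B.det ≠ 0)
    (hLLL : LLLReduced δ (col B)) :
    ‖col B ⟨0, hn⟩‖ ≤
      (1 / (δ - 1/2)) ^ (((n : ℝ) - 1) / 4) * ‖B.det‖ ^ ((1 : ℝ) / n) :=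
  stmt2_general n hn δ hδ1 B hLLL
end

section
/- When the LLL algorithm swaps b_{k-1} and b_k (upon failure of the Lovász test ‖b̂_k + μ_{k,k-1} b̂_{k-1}‖² < δ‖b̂_{k-1}‖²), the new (k-1)-th Gram-Schmidt vector equals b̂_k + μ_{k,k-1} b̂_{k-1}, and hence its squared norm is strictly smaller than δ times the old ‖b̂_{k-1}‖². -/
/-! The Gram-Schmidt vectors before `j` depend only on `b k` for `k < j`, so the swap leaves
them unchanged. Hence the new `j`-th vector is `b i` minus its projections onto `b̂ k`, `k < j`,
which is `b̂ i` with the projection of `b i` onto `b̂ j` added back, i.e. `b̂ i + μ i j • b̂ j`. -/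

namespace InnerProductSpace

variable {𝕜 E ι : Type*} [RCLike 𝕜] [NormedAddCommGroup E] [InnerProductSpace 𝕜 E]
  [LinearOrder ι] [LocallyFiniteOrderBot ι] [WellFoundedLT ι]

theorem gramSchmidt_congr_of_eqOn_Iic {f g : ι → E} {c : ι} (h : Set.EqOn f g (Set.Iic c)) :
    gramSchmidt 𝕜 f c = gramSchmidt 𝕜 g c := by
  induction c using WellFoundedLT.induction with
  | _ c ih =>
    rw [gramSchmidt_def, gramSchmidt_def, h Set.self_mem_Iic]
    congr 1
    refine Finset.sum_congr rfl fun k hk => ?_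
    have hkc := Finset.mem_Iio.1 hk
    rw [ih k hkc (h.mono (Set.Iic_subset_Iic.2 hkc.le))]

theorem gramSchmidt_comp_swap_of_covBy (f : ι → E) {j i : ι} (hji : j ⋖ i) :
    gramSchmidt 𝕜 (f ∘ Equiv.swap j i) j =
      gramSchmidt 𝕜 f i + (𝕜 ∙ gramSchmidt 𝕜 f j).starProjection (f i) := by
  have hprefix : ∀ k < j, gramSchmidt 𝕜 (f ∘ Equiv.swap j i) k = gramSchmidt 𝕜 f k :=
    fun k hk => gramSchmidt_congr_of_eqOn_Iic fun m hm =>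
      congrArg f (Equiv.swap_apply_of_ne_of_ne (lt_of_le_of_lt hm hk).ne
        (lt_of_le_of_lt hm (hk.trans hji.lt)).ne)
  have hIio : Finset.Iio i = insert j (Finset.Iio j) := by
    rw [Finset.Iio_insert, ← Finset.coe_inj, Finset.coe_Iio, Finset.coe_Iic, hji.Iio_eq]
  rw [gramSchmidt_def 𝕜 _ j, gramSchmidt_def 𝕜 f i, hIio, Finset.sum_insert Finset.notMem_Iio_self,
    Function.comp_apply, Equiv.swap_apply_left,
    Finset.sum_congr rfl fun k hk => by rw [hprefix k (Finset.mem_Iio.1 hk)]]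
  abel

end InnerProductSpace

theorem mu_smul_gso {n : ℕ} (b : Fin n → EuclideanSpace ℂ (Fin n)) (i j : Fin n) :
    mu b i j • gso b j = (ℂ ∙ gso b j).starProjection (b i) :=
  (Submodule.starProjection_singleton ℂ (b i)).symm

theorem stmt7_general (n : ℕ) (δ : ℝ) (b : Fin n → EuclideanSpace ℂ (Fin n))
    (j i : Fin n) (hij : j.val + 1 = i.val)
    (hfail : ‖gso b i + mu b i j • gso b j‖^2 < δ * ‖gso b j‖^2) :
    gso (b ∘ Equiv.swap j i) j = gso b i + mu b i j • gso b j ∧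
    ‖gso (b ∘ Equiv.swap j i) j‖^2 < δ * ‖gso b j‖^2 := by
  have hji : j ⋖ i := Fin.covBy_iff.2 (Nat.covBy_iff_add_one_eq.2 hij)
  have hswap : gso (b ∘ Equiv.swap j i) j = gso b i + mu b i j • gso b j := by
    rw [mu_smul_gso]
    exact InnerProductSpace.gramSchmidt_comp_swap_of_covBy b hji
  exact ⟨hswap, hswap ▸ hfail⟩

theorem stmt7 (n : ℕ) (δ : ℝ) (b : Fin n → EuclideanSpace ℂ (Fin n))
    (hb : LinearIndependent ℂ b)
    (j i : Fin n) (hij : j.val + 1 = i.val)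
    (hfail : ‖gso b i + mu b i j • gso b j‖^2 < δ * ‖gso b j‖^2) :
    gso (b ∘ Equiv.swap j i) j = gso b i + mu b i j • gso b j ∧
    ‖gso (b ∘ Equiv.swap j i) j‖^2 < δ * ‖gso b j‖^2 :=
  stmt7_general n δ b j i hij hfail
end

section
/- The LLL potential D = ∏_{i=1}^{n-1} ‖b̂ᵢ‖^{2(n-i)} decreases by a factor strictly less than δ under an LLL swap of b_{k-1} and b_k when the Lovász condition fails, i.e., D_new < δ · D_old. -/
/-- The LLL potential D = ∏_{i} ‖b̂ᵢ‖^{2(n-1-i)} (0-indexed). -/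
noncomputable def pot {n : ℕ} (b : Fin n → EuclideanSpace ℂ (Fin n)) : ℝ :=
  ∏ i : Fin n, ‖gso b i‖ ^ (2 * (n - 1 - i.val))

/-!
Swapping `b_j` and `b_{j+1}` leaves the set `{b_k | k < m}` unchanged for every `m ≠ j + 1`, so
all Gram–Schmidt vectors other than those at `j` and `j + 1` are unchanged. With `u = b̂_j` and
`w = b̂_{j+1}` (so `w ⟂ u`), the new ones are `c = w + μ u` and the component of `u` orthogonal to
`c`, whence `‖b̂'_j‖² ‖b̂'_{j+1}‖² = ‖c‖² ‖u‖² - |⟪c, u⟫|² = ‖w‖² ‖u‖²`. The exponent of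
`‖b̂_j‖²` in the potential exceeds that of `‖b̂_{j+1}‖²` by one, so the swap multiplies the
potential by `‖c‖² / ‖u‖²`, which is `< δ` when the Lovász condition fails.
-/

open Submodule Set

section AdjacentSwap

variable {ι : Type*} [LinearOrder ι] [DecidableEq ι] {j i : ι}

theorem Equiv.swap_apply_lt_of_covBy (hji : j ⋖ i) {m x : ι} (hm : m ≠ i) (hx : x < m) :
    Equiv.swap j i x < m := by
  rcases eq_or_ne x j with rfl | hxj
  · rw [Equiv.swap_apply_left]
    exact lt_of_le_of_ne (hji.ge_of_gt hx) hm.symm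
  rcases eq_or_ne x i with rfl | hxi
  · rw [Equiv.swap_apply_right]
    exact hji.lt.trans hx
  · rwa [Equiv.swap_apply_of_ne_of_ne hxj hxi]

theorem image_comp_swap_Iio_of_covBy {α : Type*} (hji : j ⋖ i) (f : ι → α) {m : ι}
    (hm : m ≠ i) :
    (f ∘ Equiv.swap j i) '' Iio m = f '' Iio m := by
  ext y
  constructor
  · rintro ⟨x, hx, rfl⟩
    exact ⟨Equiv.swap j i x, Equiv.swap_apply_lt_of_covBy hji hm hx, rfl⟩
  · rintro ⟨x, hx, rfl⟩
    exact ⟨Equiv.swap j i x, Equiv.swap_apply_lt_of_covBy hji hm hx, by simp⟩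

end AdjacentSwap

theorem Submodule.span_image_Iio_of_covBy {R M ι : Type*} [Semiring R] [AddCommMonoid M]
    [Module R M] [LinearOrder ι] {j i : ι} (hji : j ⋖ i) (g : ι → M) :
    span R (g '' Iio i) = (R ∙ g j) ⊔ span R (g '' Iio j) := by
  rw [hji.Iio_eq, ← Iio_insert, image_insert_eq, span_insert]

theorem Finset.prod_pow_mul_eq_mul_prod_pow {M ι : Type*} [CommMonoid M] [Fintype ι]
    [DecidableEq ι] {x y : ι → M} {e : ι → ℕ} {j i : ι} (hji : j ≠ i) (he : e j = e i + 1)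
    (hy : ∀ m, m ≠ j → m ≠ i → y m = x m) (hxy : y j * y i = x j * x i) :
    (∏ m, y m ^ e m) * x j = y j * ∏ m, x m ^ e m := by
  have hi : i ∈ univ.erase j := mem_erase.2 ⟨hji.symm, mem_univ i⟩
  rw [← mul_prod_erase _ _ (mem_univ j), ← mul_prod_erase _ _ hi,
    ← mul_prod_erase _ (fun m => x m ^ e m) (mem_univ j),
    ← mul_prod_erase _ (fun m => x m ^ e m) hi]
  have hrest : ∏ m ∈ (univ.erase j).erase i, y m ^ e m =
      ∏ m ∈ (univ.erase j).erase i, x m ^ e m :=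
    prod_congr rfl fun m hm => by
      rw [mem_erase, mem_erase] at hm
      rw [hy m hm.2.1 hm.1]
  calc _ = y j * (y j * y i) ^ e i * x j * ∏ m ∈ (univ.erase j).erase i, y m ^ e m := by
        rw [he, pow_succ, mul_pow]; ac_rfl
    _ = _ := by rw [hxy, hrest, he, pow_succ, mul_pow]; ac_rfl

namespace InnerProductSpace

variable {𝕜 E : Type*} [RCLike 𝕜] [NormedAddCommGroup E] [InnerProductSpace 𝕜 E]

theorem mem_orthogonal_span_iff {s : Set E} {v : E} :
    v ∈ (span 𝕜 s)ᗮ ↔ ∀ u ∈ s, inner 𝕜 u v = 0 := by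
  rw [← span_singleton_le_iff_mem, ← isOrtho_iff_le, isOrtho_comm, isOrtho_span]
  simp

theorem norm_sq_mul_norm_sub_starProjection_sq (c u : E) :
    ‖c‖ ^ 2 * ‖u - (𝕜 ∙ c).starProjection u‖ ^ 2 = ‖c‖ ^ 2 * ‖u‖ ^ 2 - ‖inner 𝕜 c u‖ ^ 2 := by
  have hpyth := norm_sq_eq_add_norm_sq_starProjection u (𝕜 ∙ c)
  rw [starProjection_orthogonal_val] at hpyth
  have hproj : ‖c‖ * ‖(𝕜 ∙ c).starProjection u‖ = ‖inner 𝕜 c u‖ := by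
    rcases eq_or_ne c 0 with rfl | hc
    · simp
    · rw [starProjection_singleton, norm_smul, norm_div, RCLike.norm_ofReal,
        abs_of_nonneg (by positivity)]
      field_simp
  linear_combination -‖c‖ ^ 2 * hpyth - (‖c‖ * ‖(𝕜 ∙ c).starProjection u‖ + ‖inner 𝕜 c u‖) * hproj

theorem norm_add_smul_sq_mul_norm_sub_starProjection_sq {w u : E} (h : inner 𝕜 w u = 0) (t : 𝕜) :
    ‖w + t • u‖ ^ 2 * ‖u - (𝕜 ∙ (w + t • u)).starProjection u‖ ^ 2 = ‖w‖ ^ 2 * ‖u‖ ^ 2 := by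
  have hwtu : inner 𝕜 w (t • u) = 0 := by rw [inner_smul_right, h, mul_zero]
  have hnorm : ‖w + t • u‖ ^ 2 = ‖w‖ ^ 2 + ‖t‖ ^ 2 * ‖u‖ ^ 2 := by
    rw [sq, norm_add_sq_eq_norm_sq_add_norm_sq_of_inner_eq_zero _ _ hwtu, norm_smul]; ring
  have hinner : ‖inner 𝕜 (w + t • u) u‖ = ‖t‖ * ‖u‖ ^ 2 := by
    rw [inner_add_left, inner_smul_left, inner_self_eq_norm_sq_to_K, h, zero_add, norm_mul,
      RCLike.norm_conj, norm_pow, RCLike.norm_ofReal, abs_norm]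
  rw [norm_sq_mul_norm_sub_starProjection_sq, hnorm, hinner]
  ring

variable {ι : Type*} [LinearOrder ι] [LocallyFiniteOrderBot ι] [WellFoundedLT ι]

theorem gramSchmidt_mem_orthogonal_span (f : ι → E) (m : ι) :
    gramSchmidt 𝕜 f m ∈ (span 𝕜 (f '' Iio m))ᗮ := by
  rw [← span_gramSchmidt_Iio, mem_orthogonal_span_iff]
  rintro _ ⟨k, hk, rfl⟩
  exact gramSchmidt_orthogonal 𝕜 f (ne_of_lt hk)

theorem sub_gramSchmidt_mem_span (f : ι → E) (m : ι) :
    f m - gramSchmidt 𝕜 f m ∈ span 𝕜 (f '' Iio m) := by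
  rw [← span_gramSchmidt_Iio, gramSchmidt_def, sub_sub_cancel]
  refine Submodule.sum_mem _ fun k hk => ?_
  have hle : 𝕜 ∙ gramSchmidt 𝕜 f k ≤ span 𝕜 (gramSchmidt 𝕜 f '' Iio m) :=
    span_mono (singleton_subset_iff.2 (mem_image_of_mem _ (Finset.mem_Iio.1 hk)))
  exact hle (starProjection_apply_mem _ _)

theorem gramSchmidt_eq_of_sub_mem_of_mem_orthogonal {f : ι → E} {m : ι} {v : E}
    (h₁ : f m - v ∈ span 𝕜 (f '' Iio m)) (h₂ : v ∈ (span 𝕜 (f '' Iio m))ᗮ) :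
    gramSchmidt 𝕜 f m = v := by
  have hK : gramSchmidt 𝕜 f m - v ∈ span 𝕜 (f '' Iio m) := by
    simpa using sub_mem h₁ (sub_gramSchmidt_mem_span f m)
  have hKperp : gramSchmidt 𝕜 f m - v ∈ (span 𝕜 (f '' Iio m))ᗮ :=
    sub_mem (gramSchmidt_mem_orthogonal_span f m) h₂
  exact sub_eq_zero.1 (disjoint_def.1 (orthogonal_disjoint _) _ hK hKperp)

variable [DecidableEq ι] {j i : ι}

theorem gramSchmidt_comp_swap_of_ne (hji : j ⋖ i) (f : ι → E) {m : ι} (hmj : m ≠ j)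
    (hmi : m ≠ i) : gramSchmidt 𝕜 (f ∘ Equiv.swap j i) m = gramSchmidt 𝕜 f m := by
  have hfm : (f ∘ Equiv.swap j i) m = f m := by
    rw [Function.comp_apply, Equiv.swap_apply_of_ne_of_ne hmj hmi]
  apply gramSchmidt_eq_of_sub_mem_of_mem_orthogonal <;>
    rw [image_comp_swap_Iio_of_covBy hji f hmi]
  · rw [hfm]
    exact sub_gramSchmidt_mem_span f m
  · exact gramSchmidt_mem_orthogonal_span f m

theorem gramSchmidt_comp_swap_left (hji : j ⋖ i) (f : ι → E) :
    gramSchmidt 𝕜 (f ∘ Equiv.swap j i) j =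
      gramSchmidt 𝕜 f i + (𝕜 ∙ gramSchmidt 𝕜 f j).starProjection (f i) := by
  apply gramSchmidt_eq_of_sub_mem_of_mem_orthogonal <;>
    rw [image_comp_swap_Iio_of_covBy hji f hji.ne]
  · have hIio : Finset.Iio i = insert j (Finset.Iio j) := by
      rw [Finset.Iio_insert]
      exact Finset.coe_injective (by simpa using hji.Iio_eq)
    have hdef := gramSchmidt_def' 𝕜 f i
    rw [hIio, Finset.sum_insert Finset.notMem_Iio_self] at hdef
    rw [Function.comp_apply, Equiv.swap_apply_left, ← span_gramSchmidt_Iio]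
    nth_rewrite 1 [hdef]
    rw [add_sub_add_left_eq_sub, add_sub_cancel_left]
    refine Submodule.sum_mem _ fun k hk => ?_
    have hle : 𝕜 ∙ gramSchmidt 𝕜 f k ≤ span 𝕜 (gramSchmidt 𝕜 f '' Iio j) :=
      span_mono (singleton_subset_iff.2 (mem_image_of_mem _ (Finset.mem_Iio.1 hk)))
    exact hle (starProjection_apply_mem _ _)
  · have hle : 𝕜 ∙ gramSchmidt 𝕜 f j ≤ (span 𝕜 (f '' Iio j))ᗮ :=
      (span_singleton_le_iff_mem _ _).2 (gramSchmidt_mem_orthogonal_span f j)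
    refine add_mem ?_ (hle (starProjection_apply_mem _ _))
    exact orthogonal_le (span_mono (image_mono (Iio_subset_Iio hji.lt.le)))
      (gramSchmidt_mem_orthogonal_span f i)

theorem gramSchmidt_comp_swap_right (hji : j ⋖ i) (f : ι → E) :
    gramSchmidt 𝕜 (f ∘ Equiv.swap j i) i = gramSchmidt 𝕜 f j -
      (𝕜 ∙ gramSchmidt 𝕜 (f ∘ Equiv.swap j i) j).starProjection (gramSchmidt 𝕜 f j) := by
  set c := gramSchmidt 𝕜 (f ∘ Equiv.swap j i) j
  have hspan : span 𝕜 ((f ∘ Equiv.swap j i) '' Iio i) = (𝕜 ∙ c) ⊔ span 𝕜 (f '' Iio j) := by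
    rw [← span_gramSchmidt_Iio, span_image_Iio_of_covBy hji, span_gramSchmidt_Iio,
      image_comp_swap_Iio_of_covBy hji f hji.ne]
  have hc : c ∈ (span 𝕜 (f '' Iio j))ᗮ := by
    rw [← image_comp_swap_Iio_of_covBy hji f hji.ne]
    exact gramSchmidt_mem_orthogonal_span _ j
  apply gramSchmidt_eq_of_sub_mem_of_mem_orthogonal <;> rw [hspan]
  · rw [Function.comp_apply, Equiv.swap_apply_right, sub_sub_eq_add_sub, add_sub_right_comm]
    exact add_mem (mem_sup_right (sub_gramSchmidt_mem_span f j))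
      (mem_sup_left (starProjection_apply_mem _ _))
  · rw [← inf_orthogonal]
    refine mem_inf.2 ⟨?_, sub_mem (gramSchmidt_mem_orthogonal_span f j) ?_⟩
    · rw [← starProjection_orthogonal_val]
      exact starProjection_apply_mem _ _
    · exact (span_singleton_le_iff_mem _ _).2 hc (starProjection_apply_mem _ _)

theorem norm_gramSchmidt_comp_swap_sq_mul (hji : j ⋖ i) (f : ι → E) :
    ‖gramSchmidt 𝕜 (f ∘ Equiv.swap j i) j‖ ^ 2 * ‖gramSchmidt 𝕜 (f ∘ Equiv.swap j i) i‖ ^ 2 =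
      ‖gramSchmidt 𝕜 f j‖ ^ 2 * ‖gramSchmidt 𝕜 f i‖ ^ 2 := by
  rw [gramSchmidt_comp_swap_right hji, gramSchmidt_comp_swap_left hji,
    starProjection_singleton 𝕜 (f i), mul_comm (‖gramSchmidt 𝕜 f j‖ ^ 2)]
  exact norm_add_smul_sq_mul_norm_sub_starProjection_sq
    (gramSchmidt_orthogonal 𝕜 f hji.ne.symm) _

end InnerProductSpace

section Potential

variable {n : ℕ}

theorem pot_pos {b : Fin n → EuclideanSpace ℂ (Fin n)} (hb : LinearIndependent ℂ b) :
    0 < pot b :=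
  Finset.prod_pos fun m _ =>
    pow_pos (norm_pos_iff.2 (InnerProductSpace.gramSchmidt_ne_zero m hb)) _

theorem pot_comp_swap_mul (b : Fin n → EuclideanSpace ℂ (Fin n)) {j i : Fin n}
    (hij : j.val + 1 = i.val) :
    pot (b ∘ Equiv.swap j i) * ‖gso b j‖ ^ 2 = ‖gso (b ∘ Equiv.swap j i) j‖ ^ 2 * pot b := by
  have hji : j ⋖ i := Fin.covBy_iff.2 (Nat.covBy_iff_add_one_eq.2 hij)
  simp only [pot, pow_mul]
  refine Finset.prod_pow_mul_eq_mul_prod_pow (x := fun m => ‖gso b m‖ ^ 2)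
    (y := fun m => ‖gso (b ∘ Equiv.swap j i) m‖ ^ 2) (e := fun m => n - 1 - m.val)
    hji.ne ?_ (fun m hmj hmi => ?_) ?_
  · have := i.isLt
    omega
  · rw [gso, gso, InnerProductSpace.gramSchmidt_comp_swap_of_ne hji b hmj hmi]
  · exact InnerProductSpace.norm_gramSchmidt_comp_swap_sq_mul (𝕜 := ℂ) hji b

end Potential

theorem stmt8_general (n : ℕ) (δ : ℝ)
    (b : Fin n → EuclideanSpace ℂ (Fin n)) (hb : LinearIndependent ℂ b)
    (j i : Fin n) (hij : j.val + 1 = i.val)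
    (hfail : ‖gso b i + mu b i j • gso b j‖^2 < δ * ‖gso b j‖^2) :
    pot (b ∘ Equiv.swap j i) < δ * pot b := by
  have hji : j ⋖ i := Fin.covBy_iff.2 (Nat.covBy_iff_add_one_eq.2 hij)
  have hswap : gso (b ∘ Equiv.swap j i) j = gso b i + mu b i j • gso b j := by
    rw [gso, InnerProductSpace.gramSchmidt_comp_swap_left hji,
      Submodule.starProjection_singleton]
    rfl
  have hu : 0 < ‖gso b j‖ ^ 2 :=
    pow_pos (norm_pos_iff.2 (InnerProductSpace.gramSchmidt_ne_zero j hb)) 2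
  refine lt_of_mul_lt_mul_right ?_ hu.le
  calc pot (b ∘ Equiv.swap j i) * ‖gso b j‖ ^ 2
      = ‖gso b i + mu b i j • gso b j‖ ^ 2 * pot b := by rw [pot_comp_swap_mul b hij, hswap]
    _ < δ * ‖gso b j‖ ^ 2 * pot b := mul_lt_mul_of_pos_right hfail (pot_pos hb)
    _ = δ * pot b * ‖gso b j‖ ^ 2 := by ring

theorem stmt8 (n : ℕ) (δ : ℝ) (hδ1 : 1/2 < δ) (hδ2 : δ ≤ 1)
    (b : Fin n → EuclideanSpace ℂ (Fin n)) (hb : LinearIndependent ℂ b)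
    (j i : Fin n) (hij : j.val + 1 = i.val)
    (hfail : ‖gso b i + mu b i j • gso b j‖^2 < δ * ‖gso b j‖^2) :
    pot (b ∘ Equiv.swap j i) < δ * pot b :=
  stmt8_general n δ b hb j i hij hfail
end

section
/- Let A and a be the initial maximum and minimum squared Gram-Schmidt norms. The potential D starts at most A^{n(n-1)/2}, stays at least a^{n(n-1)/2}, and shrinks by a factor < δ at each negative Lovász test. Consequently the number K⁻ of negative Lovász tests satisfies K⁻ ≤ (n(n-1)/2) log_{1/δ}(A/a). -/
theorem stmt14 (n K : ℕ) (D : ℕ → ℝ) (S : Finset ℕ) (hS : S ⊆ Finset.range K)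
    (A a δ : ℝ) (ha : 0 < a) (haA : a ≤ A) (hδ0 : 0 < δ) (hδ1 : δ < 1)
    (hpos : ∀ j, 0 < D j)
    (h0 : D 0 ≤ A ^ (((n * (n - 1) : ℕ) : ℝ) / 2))
    (hK : a ^ (((n * (n - 1) : ℕ) : ℝ) / 2) ≤ D K)
    (hneg : ∀ j ∈ S, D (j + 1) < δ * D j)
    (hmono : ∀ j < K, j ∉ S → D (j + 1) ≤ D j) :
    (S.card : ℝ) ≤ ((n * (n - 1) : ℕ) : ℝ) / 2 * (Real.log (A / a) / Real.log (1 / δ)) := by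
  set m : ℝ := ((n * (n - 1) : ℕ) : ℝ) / 2 with hm
  have hm0 : 0 ≤ m := by positivity
  have hA : 0 < A := lt_of_lt_of_le ha haA
  -- key induction
  have key : ∀ k, k ≤ K → D k ≤ δ ^ (S ∩ Finset.range k).card * D 0 := by
    intro k
    induction k with
    | zero => intro _; simp
    | succ k ih =>
      intro hk1
      have hk : k < K := hk1
      have ihk := ih (le_of_lt hk)
      by_cases hkS : k ∈ S
      · have : S ∩ Finset.range (k + 1) = insert k (S ∩ Finset.range k) := by
          ext x
          simp only [Finset.mem_inter, Finset.mem_range, Finset.mem_insert, Nat.lt_succ_iff]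
          constructor
          · rintro ⟨hx, hx2⟩
            rcases eq_or_lt_of_le hx2 with h | h
            · exact Or.inl h
            · exact Or.inr ⟨hx, h⟩
          · rintro (rfl | ⟨h1, h2⟩)
            · exact ⟨hkS, le_refl _⟩
            · exact ⟨h1, le_of_lt h2⟩
        rw [this, Finset.card_insert_of_notMem (by simp)]
        have h1 : D (k + 1) < δ * D k := hneg k hkS
        have h2 : δ * D k ≤ δ * (δ ^ (S ∩ Finset.range k).card * D 0) :=
          mul_le_mul_of_nonneg_left ihk (le_of_lt hδ0)
        calc D (k + 1) ≤ δ * (δ ^ (S ∩ Finset.range k).card * D 0) :=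
              le_of_lt (lt_of_lt_of_le h1 h2)
          _ = δ ^ ((S ∩ Finset.range k).card + 1) * D 0 := by ring
      · have : S ∩ Finset.range (k + 1) = S ∩ Finset.range k := by
          ext x
          simp only [Finset.mem_inter, Finset.mem_range, Nat.lt_succ_iff]
          constructor
          · rintro ⟨hx, hx2⟩
            refine ⟨hx, lt_of_le_of_ne hx2 ?_⟩
            rintro rfl; exact hkS hx
          · rintro ⟨hx, hx2⟩; exact ⟨hx, le_of_lt hx2⟩
        rw [this]
        exact le_trans (hmono k hk hkS) ihk
  have hSK : S ∩ Finset.range K = S := Finset.inter_eq_left.mpr hS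
  have hchain : a ^ m ≤ δ ^ S.card * A ^ m := by
    calc a ^ m ≤ D K := hK
      _ ≤ δ ^ S.card * D 0 := by rw [← hSK]; exact key K le_rfl
      _ ≤ δ ^ S.card * A ^ m := mul_le_mul_of_nonneg_left h0 (by positivity)
  -- take logs
  have hlog : m * Real.log a ≤ (S.card : ℝ) * Real.log δ + m * Real.log A := by
    have h1 : Real.log (a ^ m) ≤ Real.log (δ ^ S.card * A ^ m) :=
      Real.log_le_log (by positivity) hchain
    rwa [Real.log_rpow ha, Real.log_mul (by positivity) (by positivity),
      Real.log_pow, Real.log_rpow hA] at h1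
  have hlogδ : 0 < Real.log (1 / δ) := Real.log_pos (by rw [lt_div_iff₀ hδ0]; linarith)
  have hlogδ' : Real.log (1 / δ) = -Real.log δ := by
    rw [one_div, Real.log_inv]
  have hAa : Real.log (A / a) = Real.log A - Real.log a := Real.log_div (ne_of_gt hA) (ne_of_gt ha)
  have hgoal : (S.card : ℝ) * Real.log (1 / δ) ≤ m * Real.log (A / a) := by
    rw [hlogδ', hAa]; linarith [hlog]
  rw [div_eq_mul_inv, ← mul_assoc]
  calc (S.card : ℝ) = (S.card : ℝ) * Real.log (1 / δ) * (Real.log (1 / δ))⁻¹ := by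
        field_simp
    _ ≤ m * Real.log (A / a) * (Real.log (1 / δ))⁻¹ := by
        apply mul_le_mul_of_nonneg_right hgoal (by positivity)
end
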